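/- For all natural numbers n, 23·P_{n+2} = R_n + 8·R_{n+1} + 10·R_{n+2}, where P is the Padovan sequence and R is the Perrin sequence. -/
import Mathlib


def padovan : ℕ → ℤ
  | 0 => 1
  | 1 => 1
  | 2 => 1
  | n + 3 => padovan (n + 1) + padovan n

def perrin : ℕ → ℤ
  | 0 => 3
  | 1 => 0
  | 2 => 2
  | n + 3 => perrin (n + 1) + perrin n

theorem padovan_eq_perrin (n : ℕ) :
    23 * padovan (n + 2) = perrin n + 8 * perrin (n + 1) + 10 * perrin (n + 2) := by
  induction n using Nat.strong_induction_on with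
  | _ n ih =>
    match n with
    | 0 => decide
    | 1 => decide
    | 2 => decide
    | (m + 3) =>
      have h1 := ih (m + 1) (by omega)
      have h0 := ih m (by omega)
      simp only [padovan, perrin] at *
      ring_nf at *
      omega
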